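/- Let Θ*∈S^d be positive definite, δ∈[0,2], and Θ∈S^d. Then the function H ↦ Υ(H;Θ) is convex on the open convex set H^o = {H∈S^d : −Θ*^{−1} ≺ H ≺ Θ*^{−1}}. -/

import Mathlib

open Matrix MeasureTheory Real Filter

noncomputable section

/-- Frobenius norm of a matrix. -/
def frobNorm {d : ℕ} (A : Matrix (Fin d) (Fin d) ℝ) : ℝ :=
  Real.sqrt (∑ i, ∑ j, (A i j) ^ 2)

/-- Spectral norm of a matrix. -/
def specNorm {d : ℕ} (A : Matrix (Fin d) (Fin d) ℝ) : ℝ :=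
  ‖Matrix.toEuclideanCLM (𝕜 := ℝ) A‖

open scoped Classical in
/-- The square root of a positive semidefinite real matrix (junk value `0` otherwise). -/
def msqrt {d : ℕ} (A : Matrix (Fin d) (Fin d) ℝ) : Matrix (Fin d) (Fin d) ℝ :=
  if h : A.PosSemidef then
    (h.1.eigenvectorUnitary : Matrix (Fin d) (Fin d) ℝ) *
      diagonal ((↑) ∘ (√·) ∘ h.1.eigenvalues) *
      (star (h.1.eigenvectorUnitary : Matrix (Fin d) (Fin d) ℝ))
  else 0

/-- The standard Gaussian distribution on ℝ^d. -/
def stdGaussian (d : ℕ) : Measure (Fin d → ℝ) :=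
  Measure.pi fun _ => ProbabilityTheory.gaussianReal 0 1

/-- The Gaussian distribution `N(θ,Θ)` on ℝ^d: the law of `θ + Θ^{1/2} ξ`. -/
def gaussianVec {d : ℕ} (θ : Fin d → ℝ) (Θ : Matrix (Fin d) (Fin d) ℝ) :
    Measure (Fin d → ℝ) :=
  (stdGaussian d).map (fun ξ => θ + (msqrt Θ).mulVec ξ)

/-- The (d+1)×(d+1) symmetric matrix `[[H,h];[hᵀ,0]]`. -/
def liftSym {d : ℕ} (H : Matrix (Fin d) (Fin d) ℝ) (h : Fin d → ℝ) :
    Matrix (Fin (d+1)) (Fin (d+1)) ℝ := fun i j =>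
  if hi : (i : ℕ) < d then
    if hj : (j : ℕ) < d then H ⟨i, hi⟩ ⟨j, hj⟩ else h ⟨i, hi⟩
  else if hj : (j : ℕ) < d then h ⟨j, hj⟩ else 0

/-- The d×(d+1) matrix `[H,h]`. -/
def liftRect {d : ℕ} (H : Matrix (Fin d) (Fin d) ℝ) (h : Fin d → ℝ) :
    Matrix (Fin d) (Fin (d+1)) ℝ := fun i j =>
  if hj : (j : ℕ) < d then H i ⟨j, hj⟩ else h i

/-- The vector `[θ;1] ∈ ℝ^{d+1}`. -/
def append1 {d : ℕ} (θ : Fin d → ℝ) : Fin (d+1) → ℝ := fun i =>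
  if hi : (i : ℕ) < d then θ ⟨i, hi⟩ else 1

/-- `Υ(H;Θ)`. -/
def Upsilon {d : ℕ} (Θstar : Matrix (Fin d) (Fin d) ℝ) (δ : ℝ)
    (H Θ : Matrix (Fin d) (Fin d) ℝ) : ℝ :=
  -(1/2) * Real.log ((1 - msqrt Θstar * H * msqrt Θstar).det)
  + (1/2) * ((Θ - Θstar) * H).trace
  + δ * (2 + δ) * (frobNorm (msqrt Θstar * H * msqrt Θstar)) ^ 2
      / (2 * (1 - specNorm (msqrt Θstar * H * msqrt Θstar)))

/-- `Γ(h,H;Z)`. -/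
def Gammaf {d : ℕ} (Θstar : Matrix (Fin d) (Fin d) ℝ) (h : Fin d → ℝ)
    (H : Matrix (Fin d) (Fin d) ℝ) (Z : Matrix (Fin (d+1)) (Fin (d+1)) ℝ) : ℝ :=
  (1/2) * (Z * (liftSym H h + (liftRect H h)ᵀ * (Θstar⁻¹ - H)⁻¹ * liftRect H h)).trace

/-- `Φ(h,H;Θ,Z) = Υ(H;Θ) + Γ(h,H;Z)`. -/
def PhiG {d : ℕ} (Θstar : Matrix (Fin d) (Fin d) ℝ) (δ : ℝ) (h : Fin d → ℝ)
    (H Θ : Matrix (Fin d) (Fin d) ℝ) (Z : Matrix (Fin (d+1)) (Fin (d+1)) ℝ) : ℝ :=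
  Upsilon Θstar δ H Θ + Gammaf Θstar h H Z

/-! Conjugation by `Θ*^{1/2}` turns `Υ(·;Θ)` into a linear term plus
`W(M) = -½ log det (I - M) + c ‖M‖_F² / (2 (1 - ‖M‖))` on the symmetric `M` with
`-I ≺ M ≺ I`. The log-determinant term is convex because `log det` is concave: applying
`log x ≤ x - 1` to the eigenvalues of `C^{-1/2} P C^{-1/2}` gives the tangent bound
`log det P ≤ log det C + tr (C⁻¹ P) - d`. The penalty is the square of the convex nonnegative
function `‖M‖_F` divided by the positive concave function `1 - ‖M‖`, hence convex since
`(u, s) ↦ u² / s` is jointly convex and increasing in `u ≥ 0`. Positivity of `1 - ‖M‖` holds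
because the norm of a self-adjoint operator is its spectral radius and the spectrum of `M` lies
in `(-1, 1)`. -/

lemma convex_setOf_posDef {n : Type*} [Fintype n] :
    Convex ℝ {A : Matrix n n ℝ | A.PosDef} := by
  intro A hA B hB a b ha hb hab
  rcases ha.eq_or_lt with rfl | ha
  · simpa [show b = 1 by linarith] using hB
  · exact (hA.smul ha).add_posSemidef (hB.posSemidef.smul hb)

lemma Matrix.PosDef.mul_mul_self_of_isHermitian {n : Type*} [Fintype n] [DecidableEq n]
    {A S : Matrix n n ℝ} (hA : A.PosDef) (hS : S.IsHermitian) (hU : IsUnit S) :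
    (S * A * S).PosDef := by
  have h := (Matrix.IsUnit.posDef_star_left_conjugate_iff hU).2 hA
  rwa [star_eq_conjTranspose, hS.eq] at h

lemma Matrix.PosDef.pos_of_mem_spectrum {n : Type*} [Fintype n] [DecidableEq n]
    {A : Matrix n n ℝ} (hA : A.PosDef) {t : ℝ} (ht : t ∈ spectrum ℝ A) : 0 < t := by
  rw [hA.isHermitian.spectrum_real_eq_range_eigenvalues] at ht
  obtain ⟨i, rfl⟩ := ht
  exact hA.eigenvalues_pos i

section Msqrt

variable {d : ℕ} {A : Matrix (Fin d) (Fin d) ℝ}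

lemma msqrt_isHermitian (hA : A.PosSemidef) : (msqrt A).IsHermitian := by
  rw [msqrt, dif_pos hA]
  simp [Matrix.IsHermitian, Matrix.star_eq_conjTranspose, Matrix.mul_assoc]

lemma msqrt_mul_self (hA : A.PosSemidef) : msqrt A * msqrt A = A := by
  rw [msqrt, dif_pos hA]
  set U : Matrix (Fin d) (Fin d) ℝ := (hA.1.eigenvectorUnitary : Matrix (Fin d) (Fin d) ℝ)
  have hUU : star U * U = 1 := Matrix.mem_unitaryGroup_iff'.mp hA.1.eigenvectorUnitary.2
  conv_rhs => rw [hA.1.spectral_theorem, Unitary.conjStarAlgAut_apply]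
  simp only [Matrix.mul_assoc]
  rw [← Matrix.mul_assoc (star U) U, hUU, Matrix.one_mul, ← Matrix.mul_assoc (diagonal _),
    diagonal_mul_diagonal]
  congr 3
  funext i
  simp [Real.mul_self_sqrt (hA.eigenvalues_nonneg i)]

lemma isUnit_msqrt (hA : A.PosDef) : IsUnit (msqrt A) := by
  have h : IsUnit (msqrt A * msqrt A) := by rw [msqrt_mul_self hA.posSemidef]; exact hA.isUnit
  rw [isUnit_iff_isUnit_det, det_mul] at h
  exact (isUnit_iff_isUnit_det _).2 (isUnit_of_mul_isUnit_left h)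

lemma msqrt_mul_inv_mul_msqrt (hA : A.PosDef) : msqrt A * A⁻¹ * msqrt A = 1 := by
  have hS := (isUnit_iff_isUnit_det _).1 (isUnit_msqrt hA)
  have hinv : A⁻¹ = (msqrt A)⁻¹ * (msqrt A)⁻¹ := by
    conv_lhs => rw [← msqrt_mul_self hA.posSemidef]
    exact Matrix.mul_inv_rev _ _
  rw [hinv, ← Matrix.mul_assoc, Matrix.mul_nonsing_inv _ hS, Matrix.one_mul,
    Matrix.nonsing_inv_mul _ hS]

end Msqrt

lemma Matrix.PosDef.log_det_le_trace_sub_card {n : Type*} [Fintype n] [DecidableEq n]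
    {M : Matrix n n ℝ} (hM : M.PosDef) : Real.log M.det ≤ M.trace - Fintype.card n := by
  have hpos := hM.eigenvalues_pos
  rw [hM.isHermitian.det_eq_prod_eigenvalues, hM.isHermitian.trace_eq_sum_eigenvalues]
  simp only [RCLike.ofReal_real_eq_id, id]
  rw [Real.log_prod fun i _ => (hpos i).ne']
  calc ∑ i, Real.log (hM.isHermitian.eigenvalues i)
      ≤ ∑ i, (hM.isHermitian.eigenvalues i - 1) :=
        Finset.sum_le_sum fun i _ => Real.log_le_sub_one_of_pos (hpos i)
    _ = _ := by simp [Finset.sum_sub_distrib]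

lemma log_det_le_log_det_add_trace {d : ℕ} {P C : Matrix (Fin d) (Fin d) ℝ} (hP : P.PosDef)
    (hC : C.PosDef) : Real.log P.det ≤ Real.log C.det + (C⁻¹ * P).trace - d := by
  set R := msqrt C⁻¹
  have hRR : R * R = C⁻¹ := msqrt_mul_self hC.inv.posSemidef
  have key := (hP.mul_mul_self_of_isHermitian (msqrt_isHermitian hC.inv.posSemidef)
    (isUnit_msqrt hC.inv)).log_det_le_trace_sub_card
  have hdet : (R * P * R).det = (C.det)⁻¹ * P.det := by
    rw [det_mul, det_mul, mul_comm R.det, mul_assoc, ← det_mul, hRR, det_nonsing_inv,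
      Ring.inverse_eq_inv', mul_comm]
  rw [hdet, Real.log_mul (inv_ne_zero hC.det_pos.ne') hP.det_pos.ne', Real.log_inv,
    trace_mul_cycle, hRR, Fintype.card_fin] at key
  linarith

lemma concaveOn_log_det {d : ℕ} :
    ConcaveOn ℝ {P : Matrix (Fin d) (Fin d) ℝ | P.PosDef} (fun P => Real.log P.det) := by
  refine ⟨convex_setOf_posDef, fun P hP Q hQ a b ha hb hab => ?_⟩
  set C := a • P + b • Q
  have hC : C.PosDef := convex_setOf_posDef hP hQ ha hb hab
  have hCC : (C⁻¹ * C).trace = d := by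
    rw [Matrix.nonsing_inv_mul _ (isUnit_iff_ne_zero.2 hC.det_pos.ne'), trace_one,
      Fintype.card_fin]
  have htr : a * (C⁻¹ * P).trace + b * (C⁻¹ * Q).trace = d := by
    rw [← hCC, Matrix.mul_add, trace_add, mul_smul_comm, mul_smul_comm, trace_smul, trace_smul,
      smul_eq_mul, smul_eq_mul]
  have h₁ := log_det_le_log_det_add_trace hP hC
  have h₂ := log_det_le_log_det_add_trace hQ hC
  have hsplit : ∀ x : ℝ, x = a * x + b * x := fun x => by rw [← add_mul, hab, one_mul]
  simp only [smul_eq_mul]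
  linarith [mul_le_mul_of_nonneg_left h₁ ha, mul_le_mul_of_nonneg_left h₂ hb,
    hsplit (Real.log C.det), hsplit d]

open scoped Matrix.Norms.Frobenius in
lemma frobNorm_eq_norm {d : ℕ} (A : Matrix (Fin d) (Fin d) ℝ) : frobNorm A = ‖A‖ := by
  rw [frobNorm, frobenius_norm_def, Real.sqrt_eq_rpow]
  norm_num

open scoped Matrix.Norms.Frobenius in
lemma convexOn_frobNorm {d : ℕ} : ConvexOn ℝ Set.univ (frobNorm (d := d)) := by
  simpa only [funext frobNorm_eq_norm] using convexOn_norm convex_univ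

open scoped Matrix.Norms.L2Operator in
lemma convexOn_specNorm {d : ℕ} : ConvexOn ℝ Set.univ (specNorm (d := d)) :=
  convexOn_norm convex_univ

lemma abs_lt_one_of_mem_spectrum {n : Type*} [Fintype n] [DecidableEq n] {M : Matrix n n ℝ}
    (h₁ : (1 - M).PosDef) (h₂ : (M + 1).PosDef) {t : ℝ} (ht : t ∈ spectrum ℝ M) : |t| < 1 := by
  have hsub : 1 - t ∈ spectrum ℝ (1 - M) := by
    simpa using spectrum.singleton_sub_eq M (1 : ℝ) ▸ Set.sub_mem_sub (Set.mem_singleton 1) ht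
  have hadd : 1 + t ∈ spectrum ℝ (M + 1) := by
    simpa [add_comm M] using
      spectrum.singleton_add_eq M (1 : ℝ) ▸ Set.add_mem_add (Set.mem_singleton 1) ht
  have := h₁.pos_of_mem_spectrum hsub
  have := h₂.pos_of_mem_spectrum hadd
  exact abs_lt.2 ⟨by linarith, by linarith⟩

lemma specNorm_lt_one {d : ℕ} {M : Matrix (Fin d) (Fin d) ℝ} (hM : M.IsHermitian)
    (h₁ : (1 - M).PosDef) (h₂ : (M + 1).PosDef) : specNorm M < 1 := by
  set T := toEuclideanCLM (𝕜 := ℝ) M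
  have hT : IsSelfAdjoint T := hM.isSelfAdjoint.map _
  have hσ : spectrum ℝ T = spectrum ℝ M := AlgEquiv.spectrum_eq (toEuclideanCLM (𝕜 := ℝ)) M
  have hρ : spectralRadius ℝ T < 1 := by
    rcases (spectrum ℝ T).eq_empty_or_nonempty with h | h
    · simp [spectralRadius, h]
    · obtain ⟨t, ht, hρ⟩ := spectrum.exists_nnnorm_eq_spectralRadius_of_nonempty h
      rw [← hρ]
      simpa [← NNReal.coe_lt_coe] using abs_lt_one_of_mem_spectrum h₁ h₂ (hσ ▸ ht)
  rw [ContinuousLinearMap.spectralRadius_eq_nnnorm T hT] at hρ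
  exact_mod_cast hρ

lemma add_sq_div_add_le {x y p q : ℝ} (hp : 0 < p) (hq : 0 < q) :
    (x + y) ^ 2 / (p + q) ≤ x ^ 2 / p + y ^ 2 / q := by
  simpa [Fin.sum_univ_two] using
    Finset.sq_sum_div_le_sum_sq_div Finset.univ ![x, y] (g := ![p, q]) (by simp [hp, hq])

lemma ConvexOn.sq_div {E : Type*} [AddCommMonoid E] [Module ℝ E] {s : Set E} {f g : E → ℝ}
    (hf : ConvexOn ℝ s f) (hf₀ : ∀ x ∈ s, 0 ≤ f x) (hg : ConcaveOn ℝ s g)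
    (hg₀ : ∀ x ∈ s, 0 < g x) : ConvexOn ℝ s fun x => f x ^ 2 / g x := by
  refine convexOn_iff_forall_pos.2 ⟨hf.1, fun x hx y hy a b ha hb hab => ?_⟩
  have hz := hf.1 hx hy ha.le hb.le hab
  have hgx := hg₀ x hx
  have hgy := hg₀ y hy
  calc f (a • x + b • y) ^ 2 / g (a • x + b • y)
      ≤ (a * f x + b * f y) ^ 2 / (a * g x + b * g y) :=
        div_le_div₀ (by positivity) (pow_le_pow_left₀ (hf₀ _ hz) (hf.2 hx hy ha.le hb.le hab) 2)
          (by positivity) (hg.2 hx hy ha.le hb.le hab)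
    _ ≤ (a * f x) ^ 2 / (a * g x) + (b * f y) ^ 2 / (b * g y) :=
        add_sq_div_add_le (by positivity) (by positivity)
    _ = a • (f x ^ 2 / g x) + b • (f y ^ 2 / g y) := by
        simp only [smul_eq_mul]
        field_simp

def symmIoo {n : Type*} [Fintype n] (A : Matrix n n ℝ) : Set (Matrix n n ℝ) :=
  {H | H.IsSymm ∧ (A - H).PosDef ∧ (H + A).PosDef}

lemma convex_symmIoo {n : Type*} [Fintype n] (A : Matrix n n ℝ) : Convex ℝ (symmIoo A) := by
  have hsymm : Convex ℝ {H : Matrix n n ℝ | H.IsSymm} := fun x hx y hy a b _ _ _ =>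
    (hx.smul a).add (hy.smul b)
  exact hsymm.inter
    ((convex_setOf_posDef.affine_preimage (AffineEquiv.constVSub ℝ A).toAffineMap).inter
      (convex_setOf_posDef.translate_preimage_left A))

lemma mul_mul_mem_symmIoo {n : Type*} [Fintype n] [DecidableEq n] {A H S : Matrix n n ℝ}
    (hS : S.IsHermitian) (hU : IsUnit S) (hH : H ∈ symmIoo A) :
    S * H * S ∈ symmIoo (S * A * S) := by
  obtain ⟨hsymm, hsub, hadd⟩ := hH
  have hSt : Sᵀ = S := by simpa [conjTranspose_eq_transpose_of_trivial] using hS.eq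
  refine ⟨?_, ?_, ?_⟩
  · rw [IsSymm, transpose_mul, transpose_mul, hSt, hsymm.eq, Matrix.mul_assoc]
  · simpa only [Matrix.mul_sub, Matrix.sub_mul] using hsub.mul_mul_self_of_isHermitian hS hU
  · simpa only [Matrix.mul_add, Matrix.add_mul] using hadd.mul_mul_self_of_isHermitian hS hU

/-- `Υ(H;Θ)` without its linear term, in the coordinates `M = Θ*^{1/2} H Θ*^{1/2}`;
`c` stands for `δ(2+δ)`. -/
def whitenedUpsilon {d : ℕ} (c : ℝ) (M : Matrix (Fin d) (Fin d) ℝ) : ℝ :=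
  -(1/2) * Real.log (1 - M).det + c * frobNorm M ^ 2 / (2 * (1 - specNorm M))

lemma convexOn_whitenedUpsilon {d : ℕ} {c : ℝ} (hc : 0 ≤ c) :
    ConvexOn ℝ (symmIoo (1 : Matrix (Fin d) (Fin d) ℝ)) (whitenedUpsilon c) := by
  have hU := convex_symmIoo (1 : Matrix (Fin d) (Fin d) ℝ)
  have hlogdet :
      ConvexOn ℝ (symmIoo 1) fun M : Matrix (Fin d) (Fin d) ℝ => -Real.log (1 - M).det :=
    (concaveOn_log_det.comp_affineMap (AffineEquiv.constVSub ℝ 1).toAffineMap).neg.subset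
      (fun M hM => hM.2.1) hU
  have hpenalty : ConvexOn ℝ (symmIoo 1)
      fun M : Matrix (Fin d) (Fin d) ℝ => frobNorm M ^ 2 / (1 - specNorm M) :=
    (convexOn_frobNorm.subset (Set.subset_univ _) hU).sq_div (fun M _ => Real.sqrt_nonneg _)
      ((concaveOn_const 1 hU).sub (convexOn_specNorm.subset (Set.subset_univ _) hU))
      fun M ⟨hsymm, hsub, hadd⟩ => sub_pos.2 (specNorm_lt_one
        (by simpa [IsHermitian, conjTranspose_eq_transpose_of_trivial] using hsymm.eq) hsub hadd)
  refine ((hlogdet.smul (by norm_num : (0 : ℝ) ≤ 1 / 2)).add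
    (hpenalty.smul (by positivity : 0 ≤ c / 2))).congr fun M _ => ?_
  simp only [whitenedUpsilon, smul_eq_mul, Pi.add_apply, div_mul_eq_div_div_swap]
  ring

lemma upsilon_eq_whitenedUpsilon {d : ℕ} (Θstar : Matrix (Fin d) (Fin d) ℝ) (δ : ℝ)
    (H Θ : Matrix (Fin d) (Fin d) ℝ) :
    Upsilon Θstar δ H Θ = whitenedUpsilon (δ * (2 + δ)) (msqrt Θstar * H * msqrt Θstar)
      + (1/2) * ((Θ - Θstar) * H).trace := by
  rw [Upsilon, whitenedUpsilon]
  ring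

theorem statement5_general {d : ℕ} (Θstar : Matrix (Fin d) (Fin d) ℝ)
    (hstar : Θstar.PosDef) (δ : ℝ) (hδ0 : 0 ≤ δ)
    (Θ : Matrix (Fin d) (Fin d) ℝ) :
    ConvexOn ℝ
      {H : Matrix (Fin d) (Fin d) ℝ |
        H.IsSymm ∧ (Θstar⁻¹ - H).PosDef ∧ (H + Θstar⁻¹).PosDef}
      (fun H => Upsilon Θstar δ H Θ) := by
  set S := msqrt Θstar
  let whiten : Matrix (Fin d) (Fin d) ℝ →ₗ[ℝ] Matrix (Fin d) (Fin d) ℝ :=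
    LinearMap.mulLeft ℝ S ∘ₗ LinearMap.mulRight ℝ S
  let linearPart : Matrix (Fin d) (Fin d) ℝ →ₗ[ℝ] ℝ :=
    (1 / 2 : ℝ) • (traceLinearMap (Fin d) ℝ ℝ ∘ₗ LinearMap.mulLeft ℝ (Θ - Θstar))
  have hmaps : symmIoo Θstar⁻¹ ⊆ whiten ⁻¹' symmIoo 1 := fun H hH => by
    simpa [whiten, S, msqrt_mul_inv_mul_msqrt hstar, Matrix.mul_assoc] using
      mul_mul_mem_symmIoo (msqrt_isHermitian hstar.posSemidef) (isUnit_msqrt hstar) hH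
  have hwhitened :=
    ((convexOn_whitenedUpsilon (by positivity : 0 ≤ δ * (2 + δ))).comp_linearMap whiten).subset
      hmaps (convex_symmIoo _)
  refine (hwhitened.add (linearPart.convexOn (convex_symmIoo _))).congr fun H _ => ?_
  simp [upsilon_eq_whitenedUpsilon, whiten, linearPart, S, Matrix.mul_assoc]

/-- convexity of `H ↦ Υ(H;Θ)` on `H^o = {H ∈ S^d : −Θ*⁻¹ ≺ H ≺ Θ*⁻¹}`. -/
theorem statement5 {d : ℕ} (Θstar : Matrix (Fin d) (Fin d) ℝ) (hstarSym : Θstar.IsSymm)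
    (hstar : Θstar.PosDef) (δ : ℝ) (hδ0 : 0 ≤ δ) (hδ2 : δ ≤ 2)
    (Θ : Matrix (Fin d) (Fin d) ℝ) (hΘsym : Θ.IsSymm) :
    ConvexOn ℝ
      {H : Matrix (Fin d) (Fin d) ℝ |
        H.IsSymm ∧ (Θstar⁻¹ - H).PosDef ∧ (H + Θstar⁻¹).PosDef}
      (fun H => Upsilon Θstar δ H Θ) :=
  statement5_general Θstar hstar δ hδ0 Θ
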